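/- arXiv:1204.2460 — 3 statements merged into one kernel-verified Lean document; each statement's English description precedes it below -/
import Mathlib

section
/- Let l ≥ 2 and r ≥ 2 be integers. Define an r-uniform relational structure S on the vertex set {0, 1, ..., (r−1)l} by letting R^S consist of all r-tuples of distinct elements (s_1,...,s_r) such that {s_1,...,s_r} ⊆ S ∖ {0} or {s_1,...,s_r} ⊆ S ∖ {1}. Then: (a) every l-colouring of S (a map γ : S → {1,...,l} such that no R-relationship is monochromatic) satisfies γ(0) = γ(1); and (b) for every colour i ∈ {1,...,l} there exists an l-colouring γ of S with γ(0) = γ(1) = i. -/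
/-!
(a) There are `(r - 1) l + 1` vertices and only `l` colours, so by pigeonhole some colour class
has at least `r` elements. Any `r` of them form a monochromatic relation unless the class contains
both `0` and `1`; hence `γ 0 = γ 1`.

(b) Cut `1, …, (r - 1) l` into `l` consecutive blocks of `r - 1` vertices, give the blocks distinct
colours, starting with `i`, and put `0` into the first block. Every colour class has at most `r - 1`
vertices except the class `{0, 1, …, r - 1}`, whose only `r`-subset contains both `0` and `1`.
-/

open Function Finset Fin.NatCast

/-- `γ` is a colouring of the `r`-uniform structure whose relations are the injective `r`-tuples
missing `a` or missing `b`. -/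
def IsColouring {α β : Type*} (r : ℕ) (a b : α) (γ : α → β) : Prop :=
  ∀ t : Fin r → α, Injective t → ((∀ j, t j ≠ a) ∨ (∀ j, t j ≠ b)) →
    ¬ ∀ j j', γ (t j) = γ (t j')

theorem exists_injective_forall_mem_of_le_card {α : Type*} {s : Finset α} {r : ℕ}
    (h : r ≤ #s) : ∃ t : Fin r → α, Injective t ∧ ∀ j, t j ∈ s :=
  ⟨fun j => s.equivFin.symm (Fin.castLE h j),
    Subtype.val_injective.comp (s.equivFin.symm.injective.comp (Fin.castLE_injective h)),
    fun j => (s.equivFin.symm (Fin.castLE h j)).2⟩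

theorem IsColouring.apply_eq_apply {α β : Type*} [Fintype α] [Fintype β] [DecidableEq β]
    {r : ℕ} {a b : α} {γ : α → β} (hγ : IsColouring r a b γ)
    (hcard : Fintype.card β * (r - 1) < Fintype.card α) : γ a = γ b := by
  by_contra hab
  obtain ⟨c, hc⟩ := Fintype.exists_lt_card_fiber_of_mul_lt_card γ hcard
  obtain ⟨t, ht, htc⟩ := exists_injective_forall_mem_of_le_card (show r ≤ #{x | γ x = c} by omega)
  simp only [mem_filter, mem_univ, true_and] at htc
  refine hγ t ht ?_ fun j j' => (htc j).trans (htc j').symm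
  by_cases hac : γ a = c
  · exact Or.inr fun j hj => hab (hac.trans (hj ▸ htc j).symm)
  · exact Or.inl fun j hj => hac (hj ▸ htc j)

theorem le_of_injective_of_sub_one_div_eq {r n q : ℕ} (hn : 0 < n) {t : Fin r → ℕ}
    (ht : Injective t) (h01 : (∀ j, t j ≠ 0) ∨ (∀ j, t j ≠ 1))
    (hq : ∀ j, (t j - 1) / n = q) : r ≤ n := by
  have hinj : Injective fun j => t j - 1 := by
    intro j j' h
    apply ht
    simp only at h
    rcases h01 with h0 | h1
    · have := h0 j; have := h0 j'; omega
    · have := h1 j; have := h1 j'; omega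
  have hmaps : ∀ j, t j - 1 ∈ Ico (q * n) (q * n + n) := by
    intro j
    have := (Nat.div_eq_iff hn).1 (hq j)
    rw [mem_Ico]
    omega
  calc r = #(univ : Finset (Fin r)) := by simp
    _ ≤ #(Ico (q * n) (q * n + n)) :=
      card_le_card_of_injOn _ (fun j _ => hmaps j) hinj.injOn
    _ = n := by simp

/-- Vertex `s ≥ 1` lies in block `(s - 1) / (r - 1)`; truncated subtraction puts `0` into block `0`
together with `1`. -/
def blockColouring (r l : ℕ) [NeZero l] (i : Fin l) (s : Fin ((r - 1) * l + 1)) : Fin l :=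
  i + (((s : ℕ) - 1) / (r - 1) : ℕ)

section blockColouring

variable {r l : ℕ} [NeZero l] (i : Fin l)

theorem sub_one_mul_pos (hr : 2 ≤ r) : 0 < (r - 1) * l :=
  Nat.mul_pos (by omega) (Nat.pos_of_ne_zero (NeZero.ne l))

theorem blockColouring_zero : blockColouring r l i 0 = i := by
  simp [blockColouring]

theorem blockColouring_one : blockColouring r l i 1 = i := by
  have : ((1 : Fin ((r - 1) * l + 1)) : ℕ) - 1 = 0 := by
    rw [Fin.val_one']
    exact Nat.sub_eq_zero_of_le (Nat.mod_le _ _)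
  simp only [blockColouring, this, Nat.zero_div, Nat.cast_zero, add_zero]

theorem sub_one_div_eq_of_blockColouring_eq (hr : 2 ≤ r) {s s' : Fin ((r - 1) * l + 1)}
    (h : blockColouring r l i s = blockColouring r l i s') :
    ((s : ℕ) - 1) / (r - 1) = ((s' : ℕ) - 1) / (r - 1) := by
  have hlt : ∀ x : Fin ((r - 1) * l + 1), ((x : ℕ) - 1) / (r - 1) < l := by
    intro x
    rw [Nat.div_lt_iff_lt_mul (by omega), mul_comm l]
    have := x.isLt
    have := sub_one_mul_pos (l := l) hr
    omega
  have h' := congrArg Fin.val (add_left_cancel h)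
  rwa [Fin.val_cast_of_lt (hlt s), Fin.val_cast_of_lt (hlt s')] at h'

theorem isColouring_blockColouring (hr : 2 ≤ r) : IsColouring r 0 1 (blockColouring r l i) := by
  intro t ht h01 hmono
  have hval_one : ((1 : Fin ((r - 1) * l + 1)) : ℕ) = 1 := by
    rw [Fin.val_one']
    exact Nat.mod_eq_of_lt (by have := sub_one_mul_pos (l := l) hr; omega)
  have h01' : (∀ j, (t j : ℕ) ≠ 0) ∨ (∀ j, (t j : ℕ) ≠ 1) := by
    refine h01.imp (fun h j => ?_) (fun h j => ?_)
    · exact Fin.val_ne_zero_iff.2 (h j)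
    · exact fun hj => h j (Fin.ext (hj.trans hval_one.symm))
  have := le_of_injective_of_sub_one_div_eq (by omega) (Fin.val_injective.comp ht) h01'
    fun j => sub_one_div_eq_of_blockColouring_eq i hr (hmono j ⟨0, by omega⟩)
  omega

end blockColouring

theorem stmt_9 (l r : ℕ) (hl : 2 ≤ l) (hr : 2 ≤ r) :
    (∀ γ : Fin ((r - 1) * l + 1) → Fin l,
        (∀ t : Fin r → Fin ((r - 1) * l + 1),
            Function.Injective t →
            ((∀ j, t j ≠ 0) ∨ (∀ j, t j ≠ 1)) →
            ¬ ∀ j j' : Fin r, γ (t j) = γ (t j')) →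
        γ 0 = γ 1) ∧
    (∀ i : Fin l, ∃ γ : Fin ((r - 1) * l + 1) → Fin l,
        (∀ t : Fin r → Fin ((r - 1) * l + 1),
            Function.Injective t →
            ((∀ j, t j ≠ 0) ∨ (∀ j, t j ≠ 1)) →
            ¬ ∀ j j' : Fin r, γ (t j) = γ (t j')) ∧ γ 0 = γ 1 ∧ γ 0 = i) := by
  have : NeZero l := ⟨by omega⟩
  refine ⟨fun γ hγ => IsColouring.apply_eq_apply hγ ?_, fun i => ?_⟩
  · simp only [Fintype.card_fin]
    rw [mul_comm]
    omega
  · refine ⟨blockColouring r l i, isColouring_blockColouring i hr, ?_, blockColouring_zero i⟩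
    rw [blockColouring_zero, blockColouring_one]
end

section
/- Let L be a relational language. Suppose A, B, M are L-structures with the same signature, A ⊆ M is a substructure, and B has the same universe as A. Define M[A▷B] as the structure with universe M where, for each relation symbol R of arity r: a tuple from A^r is in R^{M[A▷B]} iff it is in R^B, and a tuple from M^r ∖ A^r is in R^{M[A▷B]} iff it is in R^M. Let K be a class of finite L-structures; call a structure permitted if it embeds into a member of K, and say K weakly admits the substitution [A▷B] if for every structure N isomorphic to a member of K with A ⊆ N, N[A▷B] is permitted. Then: if [A▷B] is weakly admitted and M is any permitted structure with A ⊆ M, then M[A▷B] is permitted. -/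
/- The embedding of `M` into a member `N` of `K` extends, by finiteness, to a permutation `π`
of the ambient type; the pullback of `N` along `π` is then a represented superstructure of `M`,
to which weak admissibility applies, and `M[A▷B]` sits inside its substitution. -/

/-- A relational structure over signature `ι` with arities `ar`,
with underlying universe a subset of a common value type `V`. -/
structure RelStruct (ι : Type) (ar : ι → ℕ) (V : Type) where
  dom : Set V
  rel : ∀ i : ι, Set (Fin (ar i) → V)

namespace RelStruct

variable {ι : Type} {ar : ι → ℕ} {V : Type}

/-- `A` is a substructure of `M`. -/
def Substr (A M : RelStruct ι ar V) : Prop :=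
  A.dom ⊆ M.dom ∧ ∀ i : ι, A.rel i = {t ∈ M.rel i | ∀ j, t j ∈ A.dom}

/-- `A` embeds into `B`. -/
def Embeds (A B : RelStruct ι ar V) : Prop :=
  ∃ f : V → V, Set.InjOn f A.dom ∧ f '' A.dom ⊆ B.dom ∧
    ∀ (i : ι) (t : Fin (ar i) → V), (∀ j, t j ∈ A.dom) →
      (t ∈ A.rel i ↔ (f ∘ t) ∈ B.rel i)

/-- `A` is isomorphic to `B`. -/
def Iso (A B : RelStruct ι ar V) : Prop :=
  ∃ f : V → V, Set.InjOn f A.dom ∧ f '' A.dom = B.dom ∧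
    ∀ (i : ι) (t : Fin (ar i) → V), (∀ j, t j ∈ A.dom) →
      (t ∈ A.rel i ↔ (f ∘ t) ∈ B.rel i)

/-- `A` is permitted w.r.t. the class `K`: it embeds into a member of `K`. -/
def Permitted (K : Set (RelStruct ι ar V)) (A : RelStruct ι ar V) : Prop :=
  ∃ M ∈ K, Embeds A M

/-- `A` is represented w.r.t. the class `K`: it is isomorphic to a member of `K`. -/
def Represented (K : Set (RelStruct ι ar V)) (A : RelStruct ι ar V) : Prop :=
  ∃ M ∈ K, Iso A M

/-- `M[A ▷ B]`: the structure `M` with `A` replaced by `B` (where `A.dom = B.dom`):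
on tuples entirely inside `A.dom` the relations are those of `B`, elsewhere those of `M`. -/
def subst (M A B : RelStruct ι ar V) : RelStruct ι ar V where
  dom := M.dom
  rel := fun i =>
    {t | ((∀ j, t j ∈ A.dom) ∧ t ∈ B.rel i) ∨ ((¬ ∀ j, t j ∈ A.dom) ∧ t ∈ M.rel i)}

/-- `K` weakly admits the substitution `[A ▷ B]`. -/
def WeaklyAdmits (K : Set (RelStruct ι ar V)) (A B : RelStruct ι ar V) : Prop :=
  ∀ N : RelStruct ι ar V, Represented K N → Substr A N → Permitted K (subst N A B)


def IsEmbedding (f : V → V) (A B : RelStruct ι ar V) : Prop :=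
  Set.InjOn f A.dom ∧ f '' A.dom ⊆ B.dom ∧
    ∀ (i : ι) (t : Fin (ar i) → V), (∀ j, t j ∈ A.dom) →
      (t ∈ A.rel i ↔ (f ∘ t) ∈ B.rel i)

theorem IsEmbedding.embeds {f : V → V} {A B : RelStruct ι ar V} (h : IsEmbedding f A B) :
    Embeds A B :=
  ⟨f, h⟩

theorem Embeds.trans {A B C : RelStruct ι ar V} (hAB : Embeds A B) (hBC : Embeds B C) :
    Embeds A C := by
  obtain ⟨f, hf_inj, hf_dom, hf_rel⟩ := hAB
  obtain ⟨g, hg_inj, hg_dom, hg_rel⟩ := hBC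
  have hf_maps : Set.MapsTo f A.dom B.dom := fun x hx => hf_dom ⟨x, hx, rfl⟩
  refine ⟨g ∘ f, hg_inj.comp hf_inj hf_maps, ?_, fun i t ht => ?_⟩
  · rw [Set.image_comp]
    exact (Set.image_mono hf_dom).trans hg_dom
  · rw [hf_rel i t ht, hg_rel i (f ∘ t) fun j => hf_maps (ht j)]
    rfl

def comap (π : Equiv.Perm V) (N : RelStruct ι ar V) : RelStruct ι ar V where
  dom := π ⁻¹' N.dom
  rel := fun i => {t | (∀ j, t j ∈ π ⁻¹' N.dom) ∧ π ∘ t ∈ N.rel i}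

theorem iso_comap (π : Equiv.Perm V) (N : RelStruct ι ar V) : Iso (comap π N) N :=
  ⟨π, π.injective.injOn, Set.image_preimage_eq _ π.surjective,
    fun _ _ ht => ⟨And.right, fun h => ⟨ht, h⟩⟩⟩

theorem IsEmbedding.id_comap {f : V → V} {M N : RelStruct ι ar V} (hf : IsEmbedding f M N)
    {π : Equiv.Perm V} (hπ : Set.EqOn π f M.dom) : IsEmbedding id M (comap π N) := by
  obtain ⟨-, hf_dom, hf_rel⟩ := hf
  have hM_dom : M.dom ⊆ (comap π N).dom := fun x hx => by
    change π x ∈ N.dom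
    exact hπ hx ▸ hf_dom ⟨x, hx, rfl⟩
  refine ⟨Set.injOn_id _, by rwa [Set.image_id], fun i t ht => ?_⟩
  have hπt : π ∘ t = f ∘ t := funext fun j => hπ (ht j)
  rw [hf_rel i t ht, Function.id_comp]
  exact ⟨fun h => ⟨fun j => hM_dom (ht j), hπt ▸ h⟩, fun h => hπt ▸ h.2⟩

theorem Substr.trans_isEmbedding_id {A M N : RelStruct ι ar V} (hAM : Substr A M)
    (hMN : IsEmbedding id M N) : Substr A N := by
  obtain ⟨hAM_dom, hAM_rel⟩ := hAM
  obtain ⟨-, hMN_dom, hMN_rel⟩ := hMN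
  rw [Set.image_id] at hMN_dom
  refine ⟨hAM_dom.trans hMN_dom, fun i => ?_⟩
  rw [hAM_rel i]
  ext t
  exact and_congr_left fun ht => hMN_rel i t fun j => hAM_dom (ht j)

/-- An `id`-embedding `M → N` says that `N` is a superstructure of `M`; substitution commutes
with passing to it. -/
theorem IsEmbedding.id_subst {M N : RelStruct ι ar V} (hMN : IsEmbedding id M N)
    (A B : RelStruct ι ar V) : IsEmbedding id (subst M A B) (subst N A B) := by
  obtain ⟨-, hMN_dom, hMN_rel⟩ := hMN
  refine ⟨Set.injOn_id _, hMN_dom, fun i t ht => ?_⟩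
  have hM_iff := hMN_rel i t ht
  rw [Function.id_comp] at hM_iff ⊢
  simp only [subst, Set.mem_ofPred_eq, hM_iff]

theorem Permitted.dom_finite {K : Set (RelStruct ι ar V)} (hK : ∀ N ∈ K, N.dom.Finite)
    {M : RelStruct ι ar V} (hM : Permitted K M) : M.dom.Finite := by
  obtain ⟨N, hNK, f, hf_inj, hf_dom, -⟩ := hM
  exact Set.Finite.of_finite_image ((hK N hNK).subset hf_dom) hf_inj

end RelStruct

theorem Set.Finite.exists_perm_eqOn {V : Type} {s : Set V} (hs : s.Finite) {f : V → V}
    (hf : Set.InjOn f s) : ∃ π : Equiv.Perm V, Set.EqOn π f s := by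
  have : Finite s := hs.to_subtype
  obtain ⟨π, hπ⟩ := Equiv.Perm.exists_extending_pair Subtype.val (s.domRestrict f)
    Subtype.val_injective hf.injective
  exact ⟨π, fun x hx => hπ ⟨x, hx⟩⟩

theorem stmt_15_general {ι V : Type} {ar : ι → ℕ} (K : Set (RelStruct ι ar V))
    (hKfin : ∀ M ∈ K, M.dom.Finite)
    (A B M : RelStruct ι ar V)
    (hadm : RelStruct.WeaklyAdmits K A B)
    (hMperm : RelStruct.Permitted K M) (hAM : RelStruct.Substr A M) :
    RelStruct.Permitted K (RelStruct.subst M A B) := by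
  have hM_fin := hMperm.dom_finite hKfin
  obtain ⟨N, hNK, f, hf : RelStruct.IsEmbedding f M N⟩ := hMperm
  obtain ⟨π, hπ⟩ := hM_fin.exists_perm_eqOn hf.1
  have hM_sub : RelStruct.IsEmbedding id M (RelStruct.comap π N) := hf.id_comap hπ
  obtain ⟨P, hPK, hP⟩ :=
    hadm _ ⟨N, hNK, RelStruct.iso_comap π N⟩ (hAM.trans_isEmbedding_id hM_sub)
  exact ⟨P, hPK, (hM_sub.id_subst A B).embeds.trans hP⟩

theorem stmt_15 {ι V : Type} {ar : ι → ℕ} (K : Set (RelStruct ι ar V))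
    (hKfin : ∀ M ∈ K, M.dom.Finite)
    (A B M : RelStruct ι ar V) (hAB : A.dom = B.dom)
    (hadm : RelStruct.WeaklyAdmits K A B)
    (hMperm : RelStruct.Permitted K M) (hAM : RelStruct.Substr A M) :
    RelStruct.Permitted K (RelStruct.subst M A B) :=
  stmt_15_general K hKfin A B M hadm hMperm hAM
end

section
/- Fix integers l ≥ 2, m ≥ 2 and a real a > l satisfying ((a−1)/a)^m/(l−1)^(m−1) > 1/l^(m−1). Let σ, γ : {1,...,n} → {1,...,l} where σ satisfies n/l − 1 ≤ |σ^{-1}(i)| ≤ n/l + 1 for all i, and γ is not (n/a)-rich. Then there is a constant c > 0 (depending only on l, m, a) such that for all sufficiently large n, mult(n,σ,m) − mult(n,γ,m) ≥ c·n^m. -/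
/-!
If the colour classes of `f : Fin n → Fin l` have sizes `d_i`, the number of multichromatic
`m`-tuples is `n^m - ∑ d_i^m`, so the claim compares power sums of class sizes. For the balanced
colouring every `d_i ≤ n/l + 1`, whence `∑ d_i^m ≤ l (n/l + 1)^m = (1 + o(1)) n^m / l^(m-1)`.
If one class has fewer than `n/a` points, the other `l - 1` classes together hold more than
`(a-1)n/a` points, and Jensen's inequality gives `∑ d_i^m ≥ ((a-1)/a)^m n^m / (l-1)^(m-1)`.
The hypothesis on `a` says that the second bound exceeds the first by a fixed multiple of `n^m`.
-/

open Finset Filter Topology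

theorem pow_sum_erase_div_le_sum_pow {ι : Type*} [DecidableEq ι] {s : Finset ι} {i₀ : ι}
    (hi₀ : i₀ ∈ s) {d : ι → ℝ} (hd : ∀ i ∈ s, 0 ≤ d i) {m : ℕ} (hm : m ≠ 0) :
    (∑ i ∈ s, d i - d i₀) ^ m / ((#s : ℝ) - 1) ^ (m - 1) ≤ ∑ i ∈ s, d i ^ m := by
  obtain ⟨k, rfl⟩ := Nat.exists_eq_add_one_of_ne_zero hm
  have hjensen := pow_sum_div_card_le_sum_pow (s := s.erase i₀)
    (fun i hi => hd i (mem_of_mem_erase hi)) k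
  rw [card_erase_of_mem hi₀, Nat.cast_pred (card_pos.mpr ⟨i₀, hi₀⟩),
    sum_erase_eq_sub hi₀] at hjensen
  calc (∑ i ∈ s, d i - d i₀) ^ (k + 1) / ((#s : ℝ) - 1) ^ (k + 1 - 1)
      ≤ ∑ i ∈ s.erase i₀, d i ^ (k + 1) := by simpa using hjensen
    _ ≤ ∑ i ∈ s, d i ^ (k + 1) :=
      sum_le_sum_of_subset_of_nonneg (erase_subset _ _) fun i hi _ => pow_nonneg (hd i hi) _

section Colourings

variable {α β ι : Type*} [Fintype α] [Fintype β] [DecidableEq β]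

theorem card_filter_forall_apply_eq [DecidableEq α] [Fintype ι] [DecidableEq ι] [Nonempty ι]
    (f : α → β) [DecidablePred fun t : ι → α => ∀ j j', f (t j) = f (t j')] :
    #{t : ι → α | ∀ j j', f (t j) = f (t j')} = ∑ b, #{x | f x = b} ^ Fintype.card ι := by
  have hmono : ({t : ι → α | ∀ j j', f (t j) = f (t j')} : Finset _) =
      univ.biUnion fun b => Fintype.piFinset fun _ : ι => ({x | f x = b} : Finset α) := by
    ext t
    simp only [mem_filter, mem_univ, true_and, mem_biUnion, Fintype.mem_piFinset]
    refine ⟨fun h => ⟨f (t (Classical.arbitrary ι)), fun j => h j _⟩, ?_⟩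
    rintro ⟨b, hb⟩ j j'
    rw [hb j, hb j']
  rw [hmono, card_biUnion]
  · simp [Fintype.card_piFinset]
  · intro b _ b' _ hbb'
    refine disjoint_left.mpr fun t ht ht' => hbb' ?_
    simp only [Fintype.mem_piFinset, mem_filter, mem_univ, true_and] at ht ht'
    exact (ht (Classical.arbitrary ι)).symm.trans (ht' _)

theorem card_filter_not_forall_apply_eq [DecidableEq α] [Fintype ι] [DecidableEq ι]
    [Nonempty ι] (f : α → β) [DecidablePred fun t : ι → α => ∀ j j', f (t j) = f (t j')] :
    (#{t : ι → α | ¬ ∀ j j', f (t j) = f (t j')} : ℝ) =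
      (Fintype.card α : ℝ) ^ Fintype.card ι - ∑ b, (#{x | f x = b} : ℝ) ^ Fintype.card ι := by
  have h := card_filter_add_card_filter_not (s := (univ : Finset (ι → α)))
    fun t => ∀ j j', f (t j) = f (t j')
  rw [card_filter_forall_apply_eq, card_univ, Fintype.card_fun] at h
  rw [eq_sub_iff_add_eq']
  exact_mod_cast h

theorem sum_card_fiber_eq_card (f : α → β) : ∑ b, (#{x | f x = b} : ℝ) = Fintype.card α := by
  exact_mod_cast (card_eq_sum_card_fiberwise fun x _ => mem_univ (f x)).symm

theorem le_sum_card_fiber_pow_of_card_fiber_lt (f : α → β) {b₀ : β} {a : ℝ} (ha : 1 ≤ a)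
    (hb₀ : (#{x | f x = b₀} : ℝ) < Fintype.card α / a) {m : ℕ} (hm : m ≠ 0) :
    ((a - 1) / a) ^ m / ((Fintype.card β : ℝ) - 1) ^ (m - 1) * (Fintype.card α : ℝ) ^ m ≤
      ∑ b, (#{x | f x = b} : ℝ) ^ m := by
  set n := (Fintype.card α : ℝ)
  have hβ : (1 : ℝ) ≤ Fintype.card β := by exact_mod_cast Fintype.card_pos_iff.mpr ⟨b₀⟩
  have hrest : (a - 1) / a * n ≤ ∑ b, (#{x | f x = b} : ℝ) - #{x | f x = b₀} := by
    have : (a - 1) / a * n = n - n / a := by field_simp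
    rw [sum_card_fiber_eq_card, this]
    linarith
  have hrest_nonneg : 0 ≤ (a - 1) / a * n := by
    have : 0 < a := by linarith
    positivity
  calc _ = ((a - 1) / a * n) ^ m / ((Fintype.card β : ℝ) - 1) ^ (m - 1) := by
        rw [mul_pow]; ring
    _ ≤ (∑ b, (#{x | f x = b} : ℝ) - #{x | f x = b₀}) ^ m /
          ((Fintype.card β : ℝ) - 1) ^ (m - 1) := by gcongr
    _ ≤ _ := pow_sum_erase_div_le_sum_pow (mem_univ b₀) (fun _ _ => Nat.cast_nonneg _) hm

end Colourings

theorem eventually_sum_card_fiber_pow_le {l m : ℕ} (hl : 0 < l) (hm : m ≠ 0) {ε : ℝ}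
    (hε : 0 < ε) :
    ∀ᶠ n : ℕ in atTop, ∀ f : Fin n → Fin l, (∀ i, (#{x | f x = i} : ℝ) ≤ n / l + 1) →
      ∑ i, (#{x | f x = i} : ℝ) ^ m ≤ (1 / (l : ℝ) ^ (m - 1) + ε) * n ^ m := by
  have hlim : Tendsto (fun n : ℕ => l * (1 / l + 1 / n : ℝ) ^ m) atTop
      (𝓝 (1 / (l : ℝ) ^ (m - 1))) := by
    have h : Tendsto (fun n : ℕ => l * (1 / l + 1 / n : ℝ) ^ m) atTop
        (𝓝 (l * (1 / l + 0 : ℝ) ^ m)) :=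
      ((tendsto_const_nhds.add tendsto_one_div_atTop_nhds_zero_nat).pow m).const_mul _
    convert h using 2
    obtain ⟨k, rfl⟩ := Nat.exists_eq_add_one_of_ne_zero hm
    have : (l : ℝ) ≠ 0 := by positivity
    rw [add_zero, Nat.add_sub_cancel, one_div_pow, pow_succ]
    field_simp
  filter_upwards [hlim.eventually_lt_const (lt_add_of_pos_right _ hε), eventually_ne_atTop 0]
    with n hn hn0 f hf
  calc ∑ i, (#{x | f x = i} : ℝ) ^ m ≤ ∑ _i : Fin l, ((n : ℝ) / l + 1) ^ m :=
        sum_le_sum fun i _ => pow_le_pow_left₀ (Nat.cast_nonneg _) (hf i) m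
    _ = l * (1 / l + 1 / n : ℝ) ^ m * n ^ m := by
      rw [sum_const, card_univ, Fintype.card_fin, nsmul_eq_mul, mul_assoc, ← mul_pow]
      congr 2
      field_simp
    _ ≤ (1 / (l : ℝ) ^ (m - 1) + ε) * n ^ m := by gcongr

theorem stmt_16 (l m : ℕ) (hl : 2 ≤ l) (hm : 2 ≤ m) (a : ℝ) (hal : (l : ℝ) < a)
    (hineq : ((a - 1) / a) ^ m / ((l : ℝ) - 1) ^ (m - 1) > 1 / (l : ℝ) ^ (m - 1)) :
    ∃ c : ℝ, 0 < c ∧ ∃ N : ℕ, ∀ n ≥ N, ∀ σ γ : Fin n → Fin l,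
      (∀ i : Fin l,
        (n : ℝ) / l - 1 ≤ ((Finset.univ.filter (fun x => σ x = i)).card : ℝ) ∧
        ((Finset.univ.filter (fun x => σ x = i)).card : ℝ) ≤ (n : ℝ) / l + 1) →
      (∃ i : Fin l,
        ((Finset.univ.filter (fun x => γ x = i)).card : ℝ) < (n : ℝ) / a) →
      ((Finset.univ.filter
          (fun t : Fin m → Fin n => ¬ ∀ j j' : Fin m, σ (t j) = σ (t j'))).card : ℝ)
        - ((Finset.univ.filter
          (fun t : Fin m → Fin n => ¬ ∀ j j' : Fin m, γ (t j) = γ (t j'))).card : ℝ)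
        ≥ c * (n : ℝ) ^ m := by
  have hm0 : m ≠ 0 := by omega
  have : NeZero m := ⟨hm0⟩
  have ha : 1 ≤ a := by
    have : (2 : ℝ) ≤ l := by exact_mod_cast hl
    linarith
  set L := ((a - 1) / a) ^ m / ((l : ℝ) - 1) ^ (m - 1)
  set U := 1 / (l : ℝ) ^ (m - 1)
  have hgap : 0 < (L - U) / 2 := by linarith
  obtain ⟨N, hN⟩ := eventually_atTop.mp
    (eventually_sum_card_fiber_pow_le (l := l) (by omega) hm0 hgap)
  refine ⟨(L - U) / 2, hgap, N, fun n hn σ γ hσ ⟨i₀, hi₀⟩ => ?_⟩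
  have hσsum := hN n hn σ fun i => (hσ i).2
  have hγsum := le_sum_card_fiber_pow_of_card_fiber_lt γ ha (by simpa using hi₀) hm0
  simp only [Fintype.card_fin] at hγsum
  rw [card_filter_not_forall_apply_eq σ, card_filter_not_forall_apply_eq γ]
  simp only [Fintype.card_fin]
  linarith
end
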